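/- Let κ be an n,p-core. Then the skew length of κ, defined as the number of cells contained in an n-row of κ with hook length less than p, equals the cardinality of the multiset H_{n,p}(κ) of hook lengths of cells lying in both an n-row and a p-column. -/
import Mathlib


/-- A partition, given by its weakly decreasing sequence of parts (0-indexed,
eventually zero), identified with its Young diagram. -/
structure YPartition where
  parts : ℕ → ℕ
  antitone : ∀ ⦃i j : ℕ⦄, i ≤ j → parts j ≤ parts i
  exists_zero : ∃ N, parts N = 0

namespace YPartition

/-- The conjugate partition: `conj κ j = #{i : κ.parts i > j}` (0-indexed). -/
noncomputable def conj (κ : YPartition) (j : ℕ) : ℕ := Set.ncard {i : ℕ | j < κ.parts i}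

/-- `(i, j)` (0-indexed) is a cell of the Young diagram of `κ`. -/
def IsCell (κ : YPartition) (i j : ℕ) : Prop := j < κ.parts i

/-- The hook length of the (0-indexed) cell `(i,j)`:
in 1-indexed terms `h(i,j) = λ_i − j + λ'_j − i + 1`. -/
noncomputable def hook (κ : YPartition) (i j : ℕ) : ℕ :=
  κ.parts i + κ.conj j - i - j - 1

/-- `κ` is an `n`-core: no cell has hook length `n`. -/
def IsCore (n : ℕ) (κ : YPartition) : Prop := ∀ i j, κ.IsCell i j → κ.hook i j ≠ n

/-- The set of hook lengths of the cells in column `j` of `κ`. -/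
noncomputable def colHooks (κ : YPartition) (j : ℕ) : Set ℕ :=
  {h | ∃ i, κ.IsCell i j ∧ κ.hook i j = h}

/-- The set of hook lengths of the cells in row `i` of `κ`. -/
noncomputable def rowHooks (κ : YPartition) (i : ℕ) : Set ℕ :=
  {h | ∃ j, κ.IsCell i j ∧ κ.hook i j = h}

/-- Row `i` is an `n`-row: it is a nonempty row whose leftmost cell has hook
length `h` with `h + n` not a hook length of a cell of the first column. -/
noncomputable def IsNRow (κ : YPartition) (n i : ℕ) : Prop :=
  κ.IsCell i 0 ∧ κ.hook i 0 + n ∉ κ.colHooks 0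

/-- Column `j` is an `n`-column: it is a nonempty column whose top cell has hook
length `h` with `h + n` not a hook length of a cell of the first row. -/
noncomputable def IsNCol (κ : YPartition) (n j : ℕ) : Prop :=
  κ.IsCell 0 j ∧ κ.hook 0 j + n ∉ κ.rowHooks 0

end YPartition

namespace YPartition

open scoped Classical

variable (κ : YPartition)

lemma setOf_finite (j : ℕ) : {i : ℕ | j < κ.parts i}.Finite := by
  obtain ⟨N, hN⟩ := κ.exists_zero
  apply Set.Finite.subset (Set.finite_Iio N)
  intro i hi
  by_contra h
  simp only [Set.mem_Iio, not_lt] at h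
  have := κ.antitone h
  simp only [Set.mem_setOf_eq] at hi
  omega

lemma lt_conj_iff {i j : ℕ} : i < κ.conj j ↔ j < κ.parts i := by
  constructor
  · intro h
    by_contra hc
    push_neg at hc
    have hsub : {i' : ℕ | j < κ.parts i'} ⊆ Set.Iio i := by
      intro a ha
      simp only [Set.mem_setOf_eq] at ha
      simp only [Set.mem_Iio]
      by_contra hb
      push_neg at hb
      have := κ.antitone hb
      omega
    have := Set.ncard_le_ncard hsub (Set.finite_Iio i)
    rw [show Set.Iio i = ↑(Finset.Iio i) by simp, Set.ncard_coe_finset] at this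
    simp at this
    unfold conj at h
    omega
  · intro h
    have hsub : Set.Iic i ⊆ {i' : ℕ | j < κ.parts i'} := by
      intro a ha
      simp only [Set.mem_Iic] at ha
      have := κ.antitone ha
      simp only [Set.mem_setOf_eq]
      omega
    have := Set.ncard_le_ncard hsub (κ.setOf_finite j)
    rw [show Set.Iic i = ↑(Finset.Iic i) by simp, Set.ncard_coe_finset] at this
    simp [Nat.card_Iic] at this
    unfold conj
    omega

lemma cell_ge {i j : ℕ} (h : κ.IsCell i j) : i + j + 2 ≤ κ.parts i + κ.conj j := by
  have h1 : j < κ.parts i := h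
  have h2 : i < κ.conj j := κ.lt_conj_iff.mpr h1
  omega

lemma not_cell_le {i j : ℕ} (h : ¬ κ.IsCell i j) : κ.parts i + κ.conj j ≤ i + j := by
  have h1 : κ.parts i ≤ j := by unfold IsCell at h; omega
  have h2 : κ.conj j ≤ i := by
    by_contra hc
    push_neg at hc
    exact h (κ.lt_conj_iff.mp hc)
  omega

lemma cell_iff {i j : ℕ} : κ.IsCell i j ↔ i + j + 1 < κ.parts i + κ.conj j := by
  constructor
  · intro h; have := κ.cell_ge h; omega
  · intro h
    by_contra hc
    have := κ.not_cell_le hc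
    omega

lemma hook_eq {i j : ℕ} (h : κ.IsCell i j) :
    κ.hook i j + (i + j + 1) = κ.parts i + κ.conj j := by
  have := κ.cell_ge h
  unfold hook
  omega

lemma hook_pos {i j : ℕ} (h : κ.IsCell i j) : 1 ≤ κ.hook i j := by
  have := κ.hook_eq h
  have := κ.cell_ge h
  omega

/-- The fundamental "no solution" lemma: `parts r + conj j` is never `r + j + 1`. -/
lemma ne_succ (r j : ℕ) : κ.parts r + κ.conj j ≠ r + j + 1 := by
  by_cases h : κ.IsCell r j
  · have := κ.cell_ge h; omega
  · have := κ.not_cell_le h; omega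

/-- Structure of the hooks of row `i`: for `1 ≤ a ≤ hook i 0`, `a` is a hook of
row `i` iff `hook i 0 - a` is not a hook of column `0`. -/
lemma rowHooks_iff {i a : ℕ} (hc : κ.IsCell i 0) (ha1 : 1 ≤ a) (ha2 : a ≤ κ.hook i 0) :
    a ∈ κ.rowHooks i ↔ κ.hook i 0 - a ∉ κ.colHooks 0 := by
  have hEi0 := κ.hook_eq hc
  constructor
  · rintro ⟨j, hcij, hij⟩ ⟨r, hcr0, hr0⟩
    have hEij := κ.hook_eq hcij
    have hEr0 := κ.hook_eq hcr0
    have hne := κ.ne_succ r j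
    have hconj : κ.conj j ≤ κ.conj 0 :=
      Set.ncard_le_ncard (fun x hx => by
        simp only [Set.mem_setOf_eq] at *; omega) (κ.setOf_finite 0)
    omega
  · intro h
    by_contra hnot
    -- find the "jump" location
    have hP : ∃ j, κ.parts i + κ.conj j < i + j + 1 + a := by
      refine ⟨κ.parts i, ?_⟩
      have hnc : ¬ κ.IsCell i (κ.parts i) := by unfold IsCell; omega
      have := κ.not_cell_le hnc
      omega
    classical
    set j₀ := Nat.find hP with hj₀def
    have hPj₀ : κ.parts i + κ.conj j₀ < i + j₀ + 1 + a := Nat.find_spec hP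
    have hj₀pos : 1 ≤ j₀ := by
      rcases Nat.eq_zero_or_pos j₀ with h0 | h1
      · exfalso
        rw [h0] at hPj₀
        omega
      · exact h1
    set j := j₀ - 1 with hjdef
    have hjsucc : j + 1 = j₀ := by omega
    have hnPj : ¬ κ.parts i + κ.conj j < i + j + 1 + a := Nat.find_min hP (by omega)
    have hle : j₀ ≤ κ.parts i := Nat.find_min' hP (by
      have hnc : ¬ κ.IsCell i (κ.parts i) := by unfold IsCell; omega
      have := κ.not_cell_le hnc
      omega)
    have hcij : κ.IsCell i j := by
      unfold IsCell; omega
    have hEij := κ.hook_eq hcij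
    have hija : κ.hook i j ≠ a := fun hEq => hnot ⟨j, hcij, hEq⟩
    have hPj1 : κ.parts i + κ.conj (j + 1) < i + (j + 1) + 1 + a := by
      rw [hjsucc]; exact hPj₀
    -- now build the witness row
    set r := a + i + j + 1 - κ.parts i with hrdef
    have hr1 : κ.conj (j + 1) ≤ r := by omega
    have hr2 : r < κ.conj j := by omega
    have hpr1 : j < κ.parts r := κ.lt_conj_iff.mp hr2
    have hpr2 : κ.parts r ≤ j + 1 := by
      by_contra hcon
      have : r < κ.conj (j + 1) := κ.lt_conj_iff.mpr (by omega)
      omega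
    have hcr0 : κ.IsCell r 0 := by unfold IsCell; omega
    have hEr0 := κ.hook_eq hcr0
    exact h ⟨r, hcr0, by omega⟩

lemma conj_le_conj {j j' : ℕ} (h : j ≤ j') : κ.conj j' ≤ κ.conj j :=
  Set.ncard_le_ncard (fun x hx => by simp only [Set.mem_setOf_eq] at *; omega)
    (κ.setOf_finite j)

lemma hook_row0_inj {j j' : ℕ} (h : κ.IsCell 0 j) (h' : κ.IsCell 0 j')
    (he : κ.hook 0 j = κ.hook 0 j') : j = j' := by
  have hE := κ.hook_eq h
  have hE' := κ.hook_eq h'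
  rcases lt_trichotomy j j' with hlt | heq | hgt
  · have := κ.conj_le_conj (le_of_lt hlt)
    omega
  · exact heq
  · have := κ.conj_le_conj (le_of_lt hgt)
    omega

/-- Key lemma: the first-row hook lengths of a `p`-core are closed under
subtracting `p` (as long as the result is positive). -/
lemma sub_mem_rowHooks {p : ℕ} (hp : 1 ≤ p) (hκp : κ.IsCore p) {g : ℕ}
    (hg : g ∈ κ.rowHooks 0) (h1 : p + 1 ≤ g) : g - p ∈ κ.rowHooks 0 := by
  obtain ⟨j, hcj, hj⟩ := hg
  have hc00 : κ.IsCell 0 0 := by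
    have : j < κ.parts 0 := hcj
    unfold IsCell; omega
  have hEj := κ.hook_eq hcj
  have hE0 := κ.hook_eq hc00
  have hconj : κ.conj j ≤ κ.conj 0 := κ.conj_le_conj (Nat.zero_le j)
  have hgm : g ≤ κ.hook 0 0 := by omega
  by_contra hnot
  have h2 : 1 ≤ g - p := by omega
  have h3 : g - p ≤ κ.hook 0 0 := by omega
  have hcol : κ.hook 0 0 - (g - p) ∈ κ.colHooks 0 := by
    by_contra hcc
    exact hnot ((κ.rowHooks_iff hc00 h2 h3).mpr hcc)
  obtain ⟨r, hcr, hr⟩ := hcol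
  have hF2 : κ.hook 0 0 - g ∉ κ.colHooks 0 :=
    (κ.rowHooks_iff hc00 (by omega) hgm).mp ⟨j, hcj, hj⟩
  by_cases hgm' : g = κ.hook 0 0
  · exact hκp r 0 hcr (by omega)
  · have hEr := κ.hook_eq hcr
    have hp2 : p ≤ κ.hook r 0 := by omega
    have hmemp : p ∈ κ.rowHooks r := by
      refine (κ.rowHooks_iff hcr hp hp2).mpr ?_
      have heq : κ.hook r 0 - p = κ.hook 0 0 - g := by omega
      rw [heq]
      exact hF2
    obtain ⟨j', hcj', hj'⟩ := hmemp
    exact hκp r j' hcj' hj'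

/-- Pick the column index of the first row whose hook has a given value. -/
noncomputable def rowIdx (a : ℕ) : ℕ :=
  if h : a ∈ κ.rowHooks 0 then h.choose else 0

lemma rowIdx_spec {a : ℕ} (h : a ∈ κ.rowHooks 0) :
    κ.IsCell 0 (κ.rowIdx a) ∧ κ.hook 0 (κ.rowIdx a) = a := by
  unfold rowIdx
  rw [dif_pos h]
  exact h.choose_spec

/-- The per-row counting identity: in any row of a `p`-core, the number of
cells of hook length `< p` equals the number of cells in `p`-columns. -/
lemma row_count {p : ℕ} (hp : 1 ≤ p) (hκp : κ.IsCore p) (i : ℕ) :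
    ((Finset.range (κ.parts i)).filter fun j => κ.hook i j < p).card
      = ((Finset.range (κ.parts i)).filter fun j => κ.IsNCol p j).card := by
  classical
  have hmono : κ.parts i ≤ κ.parts 0 := κ.antitone (Nat.zero_le i)
  have e1 : ((Finset.range (κ.parts i)).filter fun j => ¬ κ.hook i j < p)
      = (Finset.range (κ.parts i)).filter fun j => p + 1 ≤ κ.hook i j := by
    apply Finset.filter_congr
    intro j hj
    simp only [Finset.mem_range] at hj
    have hc : κ.IsCell i j := hj
    have := hκp i j hc
    constructor
    · intro hh; omega
    · intro hh; omega
  have e2 : ((Finset.range (κ.parts i)).filter fun j => ¬ κ.IsNCol p j)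
      = (Finset.range (κ.parts i)).filter fun j => κ.hook 0 j + p ∈ κ.rowHooks 0 := by
    apply Finset.filter_congr
    intro j hj
    simp only [Finset.mem_range] at hj
    have hc0 : κ.IsCell 0 j := by unfold IsCell; omega
    unfold IsNCol
    constructor
    · intro hh
      by_contra hcc
      exact hh ⟨hc0, hcc⟩
    · intro hh
      intro hcc
      exact hcc.2 hh
  have key : ((Finset.range (κ.parts i)).filter fun j => κ.hook 0 j + p ∈ κ.rowHooks 0).card
      = ((Finset.range (κ.parts i)).filter fun j => p + 1 ≤ κ.hook i j).card := by
    apply Finset.card_bij' (fun j _ => κ.rowIdx (κ.hook 0 j + p))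
      (fun j' _ => κ.rowIdx (κ.hook 0 j' - p))
    · -- forward map lands in target
      intro j hj
      simp only [Finset.mem_filter, Finset.mem_range] at hj ⊢
      obtain ⟨hjr, hmem⟩ := hj
      obtain ⟨hcell1, hhook1⟩ := κ.rowIdx_spec hmem
      set j₁ := κ.rowIdx (κ.hook 0 j + p) with hj₁
      have hcij : κ.IsCell i j := hjr
      have hc0j : κ.IsCell 0 j := by unfold IsCell; omega
      have hEij := κ.hook_eq hcij
      have hE0j := κ.hook_eq hc0j
      have hE0j₁ := κ.hook_eq hcell1
      have hpos := κ.hook_pos hcij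
      have hcij₁ : κ.IsCell i j₁ := κ.cell_iff.mpr (by omega)
      have hEij₁ := κ.hook_eq hcij₁
      have hlt : j₁ < κ.parts i := hcij₁
      exact ⟨hlt, by omega⟩
    · -- backward map lands in source
      intro j' hj'
      simp only [Finset.mem_filter, Finset.mem_range] at hj' ⊢
      obtain ⟨hjr', hhk'⟩ := hj'
      have hcij' : κ.IsCell i j' := hjr'
      have hc0j' : κ.IsCell 0 j' := by unfold IsCell; omega
      have hEij' := κ.hook_eq hcij'
      have hE0j' := κ.hook_eq hc0j'
      have hge : p + 1 ≤ κ.hook 0 j' := by omega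
      have hmem' : κ.hook 0 j' - p ∈ κ.rowHooks 0 :=
        κ.sub_mem_rowHooks hp hκp ⟨j', hc0j', rfl⟩ hge
      obtain ⟨hcell2, hhook2⟩ := κ.rowIdx_spec hmem'
      set j₂ := κ.rowIdx (κ.hook 0 j' - p) with hj₂
      have hE0j₂ := κ.hook_eq hcell2
      have hcij₂ : κ.IsCell i j₂ := κ.cell_iff.mpr (by omega)
      have hlt : j₂ < κ.parts i := hcij₂
      refine ⟨hlt, ?_⟩
      have heq : κ.hook 0 j₂ + p = κ.hook 0 j' := by omega
      rw [heq]
      exact ⟨j', hc0j', rfl⟩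
    · -- left inverse
      intro j hj
      simp only [Finset.mem_filter, Finset.mem_range] at hj
      obtain ⟨hjr, hmem⟩ := hj
      obtain ⟨hcell1, hhook1⟩ := κ.rowIdx_spec hmem
      have hc0j : κ.IsCell 0 j := by
        unfold IsCell; omega
      have heq : κ.hook 0 (κ.rowIdx (κ.hook 0 j + p)) - p = κ.hook 0 j := by omega
      rw [heq]
      obtain ⟨hcell2, hhook2⟩ := κ.rowIdx_spec (⟨j, hc0j, rfl⟩ : κ.hook 0 j ∈ κ.rowHooks 0)
      exact κ.hook_row0_inj hcell2 hc0j hhook2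
    · -- right inverse
      intro j' hj'
      simp only [Finset.mem_filter, Finset.mem_range] at hj'
      obtain ⟨hjr', hhk'⟩ := hj'
      have hcij' : κ.IsCell i j' := hjr'
      have hc0j' : κ.IsCell 0 j' := by unfold IsCell; omega
      have hEij' := κ.hook_eq hcij'
      have hE0j' := κ.hook_eq hc0j'
      have hge : p + 1 ≤ κ.hook 0 j' := by omega
      have hmem' : κ.hook 0 j' - p ∈ κ.rowHooks 0 :=
        κ.sub_mem_rowHooks hp hκp ⟨j', hc0j', rfl⟩ hge
      obtain ⟨hcell2, hhook2⟩ := κ.rowIdx_spec hmem'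
      have heq : κ.hook 0 (κ.rowIdx (κ.hook 0 j' - p)) + p = κ.hook 0 j' := by omega
      rw [heq]
      obtain ⟨hcell3, hhook3⟩ := κ.rowIdx_spec (⟨j', hc0j', rfl⟩ : κ.hook 0 j' ∈ κ.rowHooks 0)
      exact κ.hook_row0_inj hcell3 hc0j' hhook3
  have h1 := Finset.card_filter_add_card_filter_not
    (s := Finset.range (κ.parts i)) (p := fun j => κ.hook i j < p)
  have h2 := Finset.card_filter_add_card_filter_not
    (s := Finset.range (κ.parts i)) (p := fun j => κ.IsNCol p j)
  rw [e1] at h1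
  rw [e2] at h2
  omega

/-- Restricting a filtered range to the cells of row `i`. -/
lemma restrict {i M : ℕ} (hM : κ.parts i ≤ M) (Q : ℕ → Prop) [DecidablePred Q] :
    ((Finset.range M).filter fun j => κ.IsCell i j ∧ Q j)
      = (Finset.range (κ.parts i)).filter Q := by
  ext j
  simp only [Finset.mem_filter, Finset.mem_range]
  unfold IsCell
  constructor
  · rintro ⟨_, hc, hq⟩; exact ⟨hc, hq⟩
  · rintro ⟨hc, hq⟩; exact ⟨by omega, hc, hq⟩

end YPartition

/-- For an `n,p`-core `κ`, the skew length (the number of cells in `n`-rows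
with hook length less than `p`) equals the number of cells lying in both an
`n`-row and a `p`-column. -/
theorem stmt4 (n p : ℕ) (hn : 1 ≤ n) (hp : 1 ≤ p) (κ : YPartition)
    (hκn : YPartition.IsCore n κ) (hκp : YPartition.IsCore p κ) :
    Set.ncard {c : ℕ × ℕ | κ.IsCell c.1 c.2 ∧ κ.IsNRow n c.1 ∧ κ.hook c.1 c.2 < p}
      = Set.ncard {c : ℕ × ℕ | κ.IsCell c.1 c.2 ∧ κ.IsNRow n c.1 ∧ κ.IsNCol p c.2} := by
  classical
  have hbound : ∀ c : ℕ × ℕ, κ.IsCell c.1 c.2 → c.1 < κ.conj 0 ∧ c.2 < κ.parts 0 := by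
    intro c hc
    have h1 : c.2 < κ.parts c.1 := hc
    have h3 : κ.parts c.1 ≤ κ.parts 0 := κ.antitone (Nat.zero_le _)
    exact ⟨κ.lt_conj_iff.mpr (by omega), by omega⟩
  have hL : {c : ℕ × ℕ | κ.IsCell c.1 c.2 ∧ κ.IsNRow n c.1 ∧ κ.hook c.1 c.2 < p}
      = ↑((Finset.range (κ.conj 0) ×ˢ Finset.range (κ.parts 0)).filter
          fun c => κ.IsCell c.1 c.2 ∧ κ.IsNRow n c.1 ∧ κ.hook c.1 c.2 < p) := by
    ext c
    simp only [Set.mem_setOf_eq, Finset.mem_coe, Finset.mem_filter, Finset.mem_product,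
      Finset.mem_range]
    constructor
    · intro h; exact ⟨⟨(hbound c h.1).1, (hbound c h.1).2⟩, h⟩
    · intro h; exact h.2
  have hR : {c : ℕ × ℕ | κ.IsCell c.1 c.2 ∧ κ.IsNRow n c.1 ∧ κ.IsNCol p c.2}
      = ↑((Finset.range (κ.conj 0) ×ˢ Finset.range (κ.parts 0)).filter
          fun c => κ.IsCell c.1 c.2 ∧ κ.IsNRow n c.1 ∧ κ.IsNCol p c.2) := by
    ext c
    simp only [Set.mem_setOf_eq, Finset.mem_coe, Finset.mem_filter, Finset.mem_product,
      Finset.mem_range]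
    constructor
    · intro h; exact ⟨⟨(hbound c h.1).1, (hbound c h.1).2⟩, h⟩
    · intro h; exact h.2
  rw [hL, hR, Set.ncard_coe_finset, Set.ncard_coe_finset,
      Finset.card_filter, Finset.card_filter, Finset.sum_product, Finset.sum_product]
  refine Finset.sum_congr rfl fun i _ => ?_
  by_cases hrow : κ.IsNRow n i
  · have hmono : κ.parts i ≤ κ.parts 0 := κ.antitone (Nat.zero_le i)
    have t1 : (∑ j ∈ Finset.range (κ.parts 0),
          if κ.IsCell i j ∧ κ.IsNRow n i ∧ κ.hook i j < p then 1 else 0)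
        = ((Finset.range (κ.parts i)).filter fun j => κ.hook i j < p).card := by
      rw [← Finset.card_filter]
      rw [← κ.restrict hmono (fun j => κ.hook i j < p)]
      congr 1
      apply Finset.filter_congr
      intro j _
      simp [hrow]
    have t2 : (∑ j ∈ Finset.range (κ.parts 0),
          if κ.IsCell i j ∧ κ.IsNRow n i ∧ κ.IsNCol p j then 1 else 0)
        = ((Finset.range (κ.parts i)).filter fun j => κ.IsNCol p j).card := by
      rw [← Finset.card_filter]
      rw [← κ.restrict hmono (fun j => κ.IsNCol p j)]
      congr 1
      apply Finset.filter_congr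
      intro j _
      simp [hrow]
    calc (∑ j ∈ Finset.range (κ.parts 0),
          if κ.IsCell (i, j).1 (i, j).2 ∧ κ.IsNRow n (i, j).1 ∧ κ.hook (i, j).1 (i, j).2 < p
          then 1 else 0)
        = ((Finset.range (κ.parts i)).filter fun j => κ.hook i j < p).card := t1
      _ = ((Finset.range (κ.parts i)).filter fun j => κ.IsNCol p j).card :=
          κ.row_count hp hκp i
      _ = _ := t2.symm
  · simp [hrow]
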